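/- arXiv:1306.4397 — 2 statements merged into one kernel-verified Lean document; each statement's English description precedes it below -/
import Mathlib

section
/- Soft-thresholding representation under an orthonormal design: assume X^T X = I_p and let β̂^{ols} = X^T y. Then any minimizer β̂ of the LES objective Q satisfies, for every k and j, β̂_{kj} = sign(β̂^{ols}_{kj}) · ( |β̂^{ols}_{kj}| − nλα w_k · exp(α|β̂_{kj}|) / Σ_{l=1}^{p_k} exp(α|β̂_{kl}|) )_+, where (a)_+ = max{0, a}. -/
/-!
With `XᵀX = I` the residual sum of squares equals `‖y‖² - ‖β̂ᵒˡˢ‖² + ‖β - β̂ᵒˡˢ‖²`, so once all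
coordinates but `(k, j)` are frozen at a minimizer `β̂`, the coordinate `t = β̂ kj` minimizes
`(t - b)² / (2n) + ψ |t|` with `b = β̂ᵒˡˢ kj` and `ψ s = λ w_k log (exp (α s) + S)`, where `S` collects
the other exponentials of group `k`. As `ψ` is differentiable and nondecreasing, the first-order
conditions give `t = b - n ψ'(|t|) sign t` when `t ≠ 0`, and `|b| ≤ n ψ'(0)` when `t = 0` (from the
one-sided derivatives); together this is soft-thresholding of `b` at level `n ψ'(|t|)`, and
`ψ'(|t|)` is exactly `λ α w_k exp (α |t|) / ∑ₗ exp (α |β̂ kl|)`.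
-/

open Set Function Real

lemma Fintype.sum_apply_update {ι M : Type*} {β : ι → Type*} [Fintype ι] [DecidableEq ι]
    [AddCommMonoid M] (g : ∀ i, β i → M) (f : ∀ i, β i) (a : ι) (x : β a) :
    ∑ i, g i (update f a x i) = g a x + ∑ i ∈ {a}ᶜ, g i (f i) := by
  rw [Fintype.sum_eq_add_sum_compl a, update_self]
  congr 1
  exact Finset.sum_congr rfl fun i hi => by rw [update_of_ne (by simpa using hi)]

lemma sum_sq_sum_mul_of_orthonormal {ι κ : Type*} [Fintype ι] [Fintype κ] [DecidableEq κ]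
    {X : ι → κ → ℝ} (hX : ∀ j j', ∑ i, X i j * X i j' = if j = j' then 1 else 0) (β : κ → ℝ) :
    ∑ i, (∑ j, X i j * β j) ^ 2 = ∑ j, β j ^ 2 := by
  calc ∑ i, (∑ j, X i j * β j) ^ 2
      = ∑ j, ∑ j', β j * β j' * ∑ i, X i j * X i j' := by
        simp_rw [sq, Finset.sum_mul_sum, Finset.mul_sum]
        rw [Finset.sum_comm]
        refine Finset.sum_congr rfl fun j _ => ?_
        rw [Finset.sum_comm]
        exact Finset.sum_congr rfl fun j' _ => Finset.sum_congr rfl fun i _ => by ring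
    _ = ∑ j, β j ^ 2 := by simp [hX, sq]

lemma sum_sq_sub_eq_of_orthonormal {ι κ : Type*} [Fintype ι] [Fintype κ] [DecidableEq κ]
    {X : ι → κ → ℝ} (hX : ∀ j j', ∑ i, X i j * X i j' = if j = j' then 1 else 0)
    (y : ι → ℝ) (β : κ → ℝ) :
    ∑ i, (y i - ∑ j, X i j * β j) ^ 2
      = ∑ i, y i ^ 2 - ∑ j, (∑ i, X i j * y i) ^ 2 + ∑ j, (β j - ∑ i, X i j * y i) ^ 2 := by
  have cross : ∑ i, y i * ∑ j, X i j * β j = ∑ j, β j * ∑ i, X i j * y i := by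
    simp_rw [Finset.mul_sum]
    rw [Finset.sum_comm]
    exact Finset.sum_congr rfl fun j _ => Finset.sum_congr rfl fun i _ => by ring
  simp only [sub_sq, Finset.sum_add_distrib, Finset.sum_sub_distrib, ← Finset.mul_sum,
    mul_assoc, cross, sum_sq_sum_mul_of_orthonormal hX]
  ring

lemma eq_max_zero_sub_of_isMinOn_Ici {ψ : ℝ → ℝ} {ν b t d : ℝ} (hν : 0 < ν) (ht : 0 ≤ t)
    (hψ : HasDerivAt ψ d t) (hmin : IsMinOn (fun u => (u - b) ^ 2 / (2 * ν) + ψ u) (Ici 0) t) :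
    t = max 0 (b - ν * d) := by
  have hderiv : HasDerivAt (fun u => (u - b) ^ 2 / (2 * ν) + ψ u) ((t - b + ν * d) / ν) t := by
    have hsq : HasDerivAt (fun u => (u - b) ^ 2 / (2 * ν)) ((t - b) / ν) t := by
      refine ((((hasDerivAt_id' t).sub_const b).fun_pow 2).div_const (2 * ν)).congr_deriv ?_
      field_simp
      ring
    exact (hsq.add hψ).congr_deriv (by field_simp)
  have hright : 0 ≤ t - b + ν * d := by
    have hcone : (1 : ℝ) ∈ posTangentConeAt (Ici 0) t := by
      apply mem_posTangentConeAt_of_segment_subset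
      rw [segment_eq_Icc (by linarith)]
      exact fun u hu => ht.trans hu.1
    have := hmin.localize.hasFDerivWithinAt_nonneg hderiv.hasDerivWithinAt.hasFDerivWithinAt hcone
    rwa [ContinuousLinearMap.toSpanSingleton_apply, smul_eq_mul, one_mul, le_div_iff₀ hν,
      zero_mul] at this
  rcases ht.eq_or_lt with rfl | hpos
  · rw [max_eq_left (by linarith)]
  · have hzero := (hmin.isLocalMin (Ici_mem_nhds hpos)).hasDerivAt_eq_zero hderiv
    rw [div_eq_zero_iff, or_iff_left hν.ne'] at hzero
    rw [max_eq_right (by linarith)]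
    linarith

theorem eq_sign_mul_max_of_isMinOn {ψ : ℝ → ℝ} {ν b t d : ℝ} (hν : 0 < ν) (hd : 0 ≤ d)
    (hψ : HasDerivAt ψ d |t|) (hmin : IsMinOn (fun u => (u - b) ^ 2 / (2 * ν) + ψ |u|) univ t) :
    t = Real.sign b * max 0 (|b| - ν * d) := by
  have hνd : 0 ≤ ν * d := mul_nonneg hν.le hd
  have hright (ht : 0 ≤ t) : t = max 0 (b - ν * d) := by
    refine eq_max_zero_sub_of_isMinOn_Ici hν ht (abs_of_nonneg ht ▸ hψ) <|
      isMinOn_iff.2 fun u (hu : 0 ≤ u) => ?_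
    simpa [abs_of_nonneg ht, abs_of_nonneg hu] using isMinOn_iff.1 hmin u (mem_univ u)
  have hleft (ht : t ≤ 0) : -t = max 0 (-b - ν * d) := by
    refine eq_max_zero_sub_of_isMinOn_Ici hν (neg_nonneg.2 ht) (abs_of_nonpos ht ▸ hψ) <|
      isMinOn_iff.2 fun u (hu : 0 ≤ u) => ?_
    have h := isMinOn_iff.1 hmin (-u) (mem_univ _)
    simp only [abs_of_nonpos ht, abs_neg, abs_of_nonneg hu] at h
    rw [show (-t - -b) ^ 2 = (t - b) ^ 2 by ring, show (u - -b) ^ 2 = (-u - b) ^ 2 by ring]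
    exact h
  rcases lt_trichotomy t 0 with ht | rfl | ht
  · have hb : -t = -b - ν * d := by
      have h := hleft ht.le
      rw [max_def] at h
      split_ifs at h <;> linarith
    rw [Real.sign_of_neg (by linarith), abs_of_neg (by linarith), ← hb,
      max_eq_right (by linarith)]
    ring
  · have hb₁ := (le_max_right 0 (b - ν * d)).trans_eq (hright le_rfl).symm
    have hb₂ := (le_max_right 0 (-b - ν * d)).trans_eq (neg_zero.symm.trans (hleft le_rfl)).symm
    have hb : |b| ≤ ν * d := abs_le.2 ⟨by linarith, by linarith⟩
    rw [max_eq_left (by linarith), mul_zero]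
  · have hb : t = b - ν * d := by
      have h := hright ht.le
      rw [max_def] at h
      split_ifs at h <;> linarith
    rw [Real.sign_of_pos (by linarith), abs_of_pos (by linarith), ← hb, max_eq_right ht.le, one_mul]

lemma hasDerivAt_log_exp_mul_add (α : ℝ) {S : ℝ} (hS : 0 ≤ S) (s : ℝ) :
    HasDerivAt (fun u => log (exp (α * u) + S)) (α * exp (α * s) / (exp (α * s) + S)) s :=
  ((((hasDerivAt_id' s).const_mul α).exp.add_const S).log (by positivity)).congr_deriv (by ring)

section LES

variable {n K : ℕ} {p : Fin K → ℕ}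

noncomputable def lesObjective (X : Fin n → (Σ k, Fin (p k)) → ℝ) (y : Fin n → ℝ) (lam α : ℝ)
    (w : Fin K → ℝ) (β : (Σ k, Fin (p k)) → ℝ) : ℝ :=
  1 / (2 * (n : ℝ)) * ∑ i, (y i - ∑ j, X i j * β j) ^ 2
    + lam * ∑ l, w l * log (∑ j, exp (α * |β ⟨l, j⟩|))

lemma isMinOn_coord_of_isMinOn_lesObjective {X : Fin n → (Σ k, Fin (p k)) → ℝ} {y : Fin n → ℝ}
    {lam α : ℝ} {w : Fin K → ℝ} {β : (Σ k, Fin (p k)) → ℝ}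
    (hX : ∀ j j', ∑ i, X i j * X i j' = if j = j' then 1 else 0)
    (hmin : IsMinOn (lesObjective X y lam α w) univ β) (k : Fin K) (j : Fin (p k)) :
    IsMinOn (fun u => (u - ∑ i, X i ⟨k, j⟩ * y i) ^ 2 / (2 * n)
      + lam * w k * log (exp (α * |u|) + ∑ l ∈ {j}ᶜ, exp (α * |β ⟨k, l⟩|))) univ (β ⟨k, j⟩) := by
  refine isMinOn_iff.2 fun u _ => ?_
  have h := isMinOn_iff.1 hmin (update β ⟨k, j⟩ u) (mem_univ _)
  -- writing `β` as `update β ⟨k, j⟩ (β ⟨k, j⟩)` lets both sides expand in the same way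
  nth_rewrite 1 [← update_eq_self ⟨k, j⟩ β] at h
  simp only [lesObjective, sum_sq_sub_eq_of_orthonormal hX] at h
  rw [Fintype.sum_apply_update (fun j' v => (v - ∑ i, X i j' * y i) ^ 2),
    Fintype.sum_apply_update (fun j' v => (v - ∑ i, X i j' * y i) ^ 2)] at h
  have hblock (v : ℝ) (l : Fin K) (j' : Fin (p l)) : update β ⟨k, j⟩ v ⟨l, j'⟩
      = update (fun l j' => β ⟨l, j'⟩) k (update (fun j' => β ⟨k, j'⟩) j v) l j' :=
    congrFun (congrFun (Sigma.curry_update (γ := fun _ _ => ℝ) (⟨k, j⟩ : Σ k, Fin (p k)) β v) l) j'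
  simp only [hblock] at h
  rw [Fintype.sum_apply_update (fun l (v : Fin (p l) → ℝ) => w l * log (∑ j, exp (α * |v j|))),
    Fintype.sum_apply_update (fun l (v : Fin (p l) → ℝ) => w l * log (∑ j, exp (α * |v j|))),
    Fintype.sum_apply_update (fun _ v => exp (α * |v|)),
    Fintype.sum_apply_update (fun _ v => exp (α * |v|))] at h
  linear_combination h

end LES

theorem les_soft_threshold_general (n K : ℕ) (hn : 0 < n)
    (p : Fin K → ℕ)
    (X : Fin n → (Σ k : Fin K, Fin (p k)) → ℝ) (y : Fin n → ℝ)
    (horth : ∀ j j' : Σ k : Fin K, Fin (p k),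
      ∑ i : Fin n, X i j * X i j' = if j = j' then 1 else 0)
    (βols : (Σ k : Fin K, Fin (p k)) → ℝ)
    (hols : ∀ j : Σ k : Fin K, Fin (p k), βols j = ∑ i : Fin n, X i j * y i)
    (lam α : ℝ) (hlam : 0 < lam) (hα : 0 < α)
    (w : Fin K → ℝ) (hw : ∀ k, 0 ≤ w k)
    (βh : (Σ k : Fin K, Fin (p k)) → ℝ)
    (hmin : IsMinOn
      (fun β : (Σ k : Fin K, Fin (p k)) → ℝ =>
        (1 / (2 * (n : ℝ))) * ∑ i : Fin n, (y i - ∑ j' : Σ k : Fin K, Fin (p k), X i j' * β j') ^ 2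
          + lam * ∑ l : Fin K, w l * Real.log (∑ j' : Fin (p l), Real.exp (α * |β ⟨l, j'⟩|)))
      Set.univ βh)
    (k : Fin K) (j : Fin (p k)) :
    βh ⟨k, j⟩ = Real.sign (βols ⟨k, j⟩) *
      max 0 (|βols ⟨k, j⟩| - (n : ℝ) * lam * α * w k *
        (Real.exp (α * |βh ⟨k, j⟩|) / ∑ l : Fin (p k), Real.exp (α * |βh ⟨k, l⟩|))) := by
  have hcoord := isMinOn_coord_of_isMinOn_lesObjective horth hmin k j
  rw [← hols] at hcoord
  have hS : 0 ≤ ∑ l ∈ {j}ᶜ, exp (α * |βh ⟨k, l⟩|) := Finset.sum_nonneg fun _ _ => (exp_pos _).le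
  have hψ := (hasDerivAt_log_exp_mul_add α hS |βh ⟨k, j⟩|).const_mul (lam * w k)
  have hd : 0 ≤ lam * w k * (α * exp (α * |βh ⟨k, j⟩|)
      / (exp (α * |βh ⟨k, j⟩|) + ∑ l ∈ {j}ᶜ, exp (α * |βh ⟨k, l⟩|))) := by
    have := hw k
    positivity
  refine (eq_sign_mul_max_of_isMinOn (Nat.cast_pos.2 hn) hd hψ hcoord).trans ?_
  rw [Fintype.sum_eq_add_sum_compl j]
  congr 2
  ring

/-- **Soft-thresholding representation under an orthonormal design.**
Assume `XᵀX = I` and let `β̂ᵒˡˢ = Xᵀ y`.  Then any minimizer `β̂` of the LES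
objective `Q` satisfies, for every `k` and `j`,
`β̂ kj = sign (β̂ᵒˡˢ kj) * ( |β̂ᵒˡˢ kj| - n λ α w k * exp (α |β̂ kj|) / ∑ l, exp (α |β̂ kl|) )₊`. -/
theorem les_soft_threshold (n K : ℕ) (hn : 0 < n) (hK : 0 < K)
    (p : Fin K → ℕ) (hp : ∀ k, 1 ≤ p k)
    (X : Fin n → (Σ k : Fin K, Fin (p k)) → ℝ) (y : Fin n → ℝ)
    (horth : ∀ j j' : Σ k : Fin K, Fin (p k),
      ∑ i : Fin n, X i j * X i j' = if j = j' then 1 else 0)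
    (βols : (Σ k : Fin K, Fin (p k)) → ℝ)
    (hols : ∀ j : Σ k : Fin K, Fin (p k), βols j = ∑ i : Fin n, X i j * y i)
    (lam α : ℝ) (hlam : 0 < lam) (hα : 0 < α)
    (w : Fin K → ℝ) (hw : ∀ k, 0 ≤ w k)
    (βh : (Σ k : Fin K, Fin (p k)) → ℝ)
    (hmin : IsMinOn
      (fun β : (Σ k : Fin K, Fin (p k)) → ℝ =>
        (1 / (2 * (n : ℝ))) * ∑ i : Fin n, (y i - ∑ j' : Σ k : Fin K, Fin (p k), X i j' * β j') ^ 2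
          + lam * ∑ l : Fin K, w l * Real.log (∑ j' : Fin (p l), Real.exp (α * |β ⟨l, j'⟩|)))
      Set.univ βh)
    (k : Fin K) (j : Fin (p k)) :
    βh ⟨k, j⟩ = Real.sign (βols ⟨k, j⟩) *
      max 0 (|βols ⟨k, j⟩| - (n : ℝ) * lam * α * w k *
        (Real.exp (α * |βh ⟨k, j⟩|) / ∑ l : Fin (p k), Real.exp (α * |βh ⟨k, l⟩|))) :=
  les_soft_threshold_general n K hn p X y horth βols hols lam α hlam hα w hw βh hmin k j
end

section
/- Cone condition for the LES estimation error (deterministic): assume y = Xβ* + ε with (2/n)·max_{k,j} |X_{kj}^T ε| ≤ λα. Then for every minimizer β̂ of Q, the error Δ = β̂ − β* satisfies Σ_{k ∉ G(β*)} ‖Δ_k‖₁ ≤ Σ_{k ∈ G(β*)} (1 + 2p_k) ‖Δ_k‖₁. -/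
/-!
Comparing `Q β̂ ≤ Q β*`: after expanding the square, the loss can drop by at most the cross term
`(1/n) ⟨Xᵀε, Δ⟩ ≤ (λα/2) ‖Δ‖₁`. On the penalty side, Jensen's inequality for `exp` shows that a
group outside the support raises `p_k · log ∑ exp (α |·|)` by at least `α ‖Δ_k‖₁`, while on a support
group this term, being `p_k α`-Lipschitz for `‖·‖₁`, falls by at most `p_k α ‖Δ_k‖₁`. Dividing the
resulting inequality by `λα` gives the cone condition.
-/

open Real Finset

section LogSumExp

variable {ι : Type*} [Fintype ι]

lemma sum_div_card_le_log_sum_exp_div_card [Nonempty ι] (x : ι → ℝ) :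
    (∑ i, x i) / Fintype.card ι ≤ log ((∑ i, exp (x i)) / Fintype.card ι) := by
  have hcard : (0 : ℝ) < Fintype.card ι := by exact_mod_cast Fintype.card_pos
  have hjensen := convexOn_exp.map_sum_le (t := univ) (w := fun _ => (Fintype.card ι : ℝ)⁻¹)
    (p := x) (fun _ _ => by positivity) (by simp [hcard.ne']) (fun _ _ => Set.mem_univ _)
  simp only [smul_eq_mul, ← mul_sum] at hjensen
  rw [le_log_iff_exp_le (by positivity)]
  simpa only [div_eq_inv_mul] using hjensen

lemma log_sum_exp_le_log_sum_exp_add [Nonempty ι] {x y : ι → ℝ} {c : ℝ}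
    (h : ∀ i, x i ≤ y i + c) :
    log (∑ i, exp (x i)) ≤ log (∑ i, exp (y i)) + c := by
  have hpos : ∀ z : ι → ℝ, 0 < ∑ i, exp (z i) := fun z =>
    sum_pos (fun i _ => exp_pos _) univ_nonempty
  calc log (∑ i, exp (x i)) ≤ log ((∑ i, exp (y i)) * exp c) := by
        refine log_le_log (hpos x) ?_
        rw [sum_mul]
        exact sum_le_sum fun i _ => by rw [← exp_add]; exact exp_le_exp.2 (h i)
    _ = log (∑ i, exp (y i)) + c := by rw [log_mul (hpos y).ne' (exp_pos c).ne', log_exp]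

noncomputable def lesGroup (α : ℝ) (u : ι → ℝ) : ℝ := log (∑ i, exp (α * |u i|))

lemma lesGroup_zero (α : ℝ) : lesGroup α (0 : ι → ℝ) = log (Fintype.card ι) := by
  simp [lesGroup]

lemma mul_sum_abs_le_card_mul_lesGroup_sub_zero [Nonempty ι] (α : ℝ) (u : ι → ℝ) :
    α * ∑ i, |u i| ≤ Fintype.card ι * (lesGroup α u - lesGroup α (0 : ι → ℝ)) := by
  have hcard : (0 : ℝ) < Fintype.card ι := by exact_mod_cast Fintype.card_pos
  have hjensen := sum_div_card_le_log_sum_exp_div_card fun i => α * |u i|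
  rw [← mul_sum, log_div (sum_pos (fun i _ => exp_pos _) univ_nonempty).ne' hcard.ne',
    div_le_iff₀' hcard] at hjensen
  rwa [lesGroup_zero]

lemma lesGroup_le_add {α : ℝ} (hα : 0 ≤ α) [Nonempty ι] (u v : ι → ℝ) :
    lesGroup α v ≤ lesGroup α u + α * ∑ i, |u i - v i| := by
  refine log_sum_exp_le_log_sum_exp_add fun i => ?_
  have htri : |v i| ≤ |u i| + |u i - v i| := by
    linarith [abs_sub_comm (v i) (u i), abs_sub_abs_le_abs_sub (v i) (u i)]
  have hle : |u i - v i| ≤ ∑ j, |u j - v j| :=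
    single_le_sum (f := fun j => |u j - v j|) (fun j _ => abs_nonneg _) (mem_univ i)
  linarith [mul_le_mul_of_nonneg_left (htri.trans (add_le_add_right hle _)) hα]

end LogSumExp

section LesPenalty

variable {κ : Type*} [Fintype κ]

noncomputable def lesPenalty (p : κ → ℕ) (α : ℝ) (β : (Σ k, Fin (p k)) → ℝ) : ℝ :=
  ∑ k, (p k : ℝ) * lesGroup α (fun j => β ⟨k, j⟩)

lemma mul_sub_le_lesPenalty_sub [DecidableEq κ] {p : κ → ℕ} (hp : ∀ k, 1 ≤ p k) {α : ℝ} (hα : 0 ≤ α)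
    (G : Finset κ) (u v : (Σ k, Fin (p k)) → ℝ) (hv : ∀ k ∉ G, ∀ j, v ⟨k, j⟩ = 0) :
    α * (∑ k ∈ Gᶜ, ∑ j, |u ⟨k, j⟩ - v ⟨k, j⟩| -
        ∑ k ∈ G, (p k : ℝ) * ∑ j, |u ⟨k, j⟩ - v ⟨k, j⟩|) ≤
      lesPenalty p α u - lesPenalty p α v := by
  have : ∀ k, Nonempty (Fin (p k)) := fun k => ⟨⟨0, hp k⟩⟩
  have hoff : ∀ k ∈ Gᶜ, α * ∑ j, |u ⟨k, j⟩ - v ⟨k, j⟩| ≤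
      p k * lesGroup α (fun j => u ⟨k, j⟩) - p k * lesGroup α (fun j => v ⟨k, j⟩) := by
    intro k hk
    have hvk : (fun j => v ⟨k, j⟩) = 0 := funext (hv k (mem_compl.1 hk))
    have h := mul_sum_abs_le_card_mul_lesGroup_sub_zero α fun j => u ⟨k, j⟩
    rw [← hvk, Fintype.card_fin, mul_sub] at h
    simpa only [hv k (mem_compl.1 hk), sub_zero] using h
  have hon : ∀ k ∈ G, -(α * (p k * ∑ j, |u ⟨k, j⟩ - v ⟨k, j⟩|)) ≤
      p k * lesGroup α (fun j => u ⟨k, j⟩) - p k * lesGroup α (fun j => v ⟨k, j⟩) := by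
    intro k _
    have := mul_le_mul_of_nonneg_left (lesGroup_le_add hα (fun j => u ⟨k, j⟩) fun j => v ⟨k, j⟩)
      (Nat.cast_nonneg (p k) : (0 : ℝ) ≤ p k)
    linarith
  have hsum := add_le_add (sum_le_sum hon) (sum_le_sum hoff)
  rw [sum_add_sum_compl, sum_sub_distrib, sum_neg_distrib] at hsum
  rw [lesPenalty, lesPenalty, mul_sub, mul_sum, mul_sum]
  linarith

end LesPenalty

section LeastSquares

variable {ρ ι : Type*} [Fintype ρ] [Fintype ι]

lemma sum_mul_le_mul_sum_abs {c : ι → ℝ} {C : ℝ} (hc : ∀ j, |c j| ≤ C) (d : ι → ℝ) :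
    ∑ j, c j * d j ≤ C * ∑ j, |d j| := by
  rw [mul_sum]
  exact sum_le_sum fun j _ => (le_abs_self _).trans <| by
    rw [abs_mul]; exact mul_le_mul_of_nonneg_right (hc j) (abs_nonneg _)

noncomputable def lsLoss (N : ℝ) (X : ρ → ι → ℝ) (y : ρ → ℝ) (β : ι → ℝ) : ℝ :=
  1 / (2 * N) * ∑ i, (y i - ∑ j, X i j * β j) ^ 2

lemma neg_mul_sum_abs_sub_le_lsLoss_sub {N : ℝ} (hN : 0 ≤ N) {X : ρ → ι → ℝ} {βstar : ι → ℝ}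
    {ε y : ρ → ℝ} (hmodel : ∀ i, y i = ∑ j, X i j * βstar j + ε i) {c : ℝ}
    (hnoise : ∀ j, 2 / N * |∑ i, X i j * ε i| ≤ c) (β : ι → ℝ) :
    -(c / 2 * ∑ j, |β j - βstar j|) ≤ lsLoss N X y β - lsLoss N X y βstar := by
  set r : ρ → ℝ := fun i => ∑ j, X i j * (β j - βstar j)
  have hres : ∀ i, y i - ∑ j, X i j * β j = ε i - r i := fun i => by
    simp only [r, hmodel i, mul_sub, sum_sub_distrib]; ring
  have hres_star : ∀ i, y i - ∑ j, X i j * βstar j = ε i := fun i => by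
    rw [hmodel i]; ring
  have hexpand : ∑ i, (ε i - r i) ^ 2 - ∑ i, ε i ^ 2 = ∑ i, r i ^ 2 - 2 * ∑ i, ε i * r i := by
    simp only [mul_sum, ← sum_sub_distrib]; exact sum_congr rfl fun i _ => by ring
  have hcross : ∑ i, ε i * r i = ∑ j, (∑ i, X i j * ε i) * (β j - βstar j) := by
    simp only [r, mul_sum, sum_mul]
    rw [sum_comm]
    exact sum_congr rfl fun j _ => sum_congr rfl fun i _ => by ring
  have hcorr : ∀ j, |1 / N * ∑ i, X i j * ε i| ≤ c / 2 := fun j => by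
    have := hnoise j
    rw [abs_mul, abs_of_nonneg (by positivity : (0 : ℝ) ≤ 1 / N)]
    linarith [show 2 / N * |∑ i, X i j * ε i| = 2 * (1 / N * |∑ i, X i j * ε i|) by ring]
  calc -(c / 2 * ∑ j, |β j - βstar j|)
      ≤ -∑ j, 1 / N * (∑ i, X i j * ε i) * (β j - βstar j) :=
        neg_le_neg (sum_mul_le_mul_sum_abs hcorr _)
    _ = 1 / (2 * N) * (-2 * ∑ i, ε i * r i) := by
        rw [hcross, mul_sum, mul_sum, ← sum_neg_distrib]
        exact sum_congr rfl fun j _ => by ring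
    _ ≤ 1 / (2 * N) * (∑ i, r i ^ 2 - 2 * ∑ i, ε i * r i) := by
        gcongr
        linarith [sum_nonneg fun i (_ : i ∈ univ) => sq_nonneg (r i)]
    _ = lsLoss N X y β - lsLoss N X y βstar := by
        simp only [lsLoss, hres, hres_star, ← hexpand]; ring

end LeastSquares

theorem les_cone_condition_general (n K : ℕ)
    (p : Fin K → ℕ) (hp : ∀ k, 1 ≤ p k)
    (X : Fin n → (Σ k : Fin K, Fin (p k)) → ℝ)
    (βstar : (Σ k : Fin K, Fin (p k)) → ℝ) (ε y : Fin n → ℝ)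
    (hmodel : ∀ i, y i = (∑ j : Σ k : Fin K, Fin (p k), X i j * βstar j) + ε i)
    (lam α : ℝ) (hlam : 0 < lam) (hα : 0 < α)
    (hnoise : ∀ j : Σ k : Fin K, Fin (p k),
      (2 / (n : ℝ)) * |∑ i : Fin n, X i j * ε i| ≤ lam * α)
    (βh : (Σ k : Fin K, Fin (p k)) → ℝ)
    (hmin : IsMinOn
      (fun β : (Σ k : Fin K, Fin (p k)) → ℝ =>
        (1 / (2 * (n : ℝ))) * ∑ i : Fin n, (y i - ∑ j : Σ k : Fin K, Fin (p k), X i j * β j) ^ 2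
          + lam * ∑ k : Fin K, (p k : ℝ) * Real.log (∑ j : Fin (p k), Real.exp (α * |β ⟨k, j⟩|)))
      Set.univ βh)
    (G : Finset (Fin K)) (hG : ∀ k, k ∈ G ↔ ∃ j : Fin (p k), βstar ⟨k, j⟩ ≠ 0) :
    ∑ k ∈ Gᶜ, (∑ j : Fin (p k), |βh ⟨k, j⟩ - βstar ⟨k, j⟩|) ≤
      ∑ k ∈ G, (1 + 2 * (p k : ℝ)) * ∑ j : Fin (p k), |βh ⟨k, j⟩ - βstar ⟨k, j⟩| := by
  have hQ : lsLoss n X y βh + lam * lesPenalty p α βh ≤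
      lsLoss n X y βstar + lam * lesPenalty p α βstar := hmin (Set.mem_univ βstar)
  have hloss := neg_mul_sum_abs_sub_le_lsLoss_sub (Nat.cast_nonneg n) hmodel hnoise βh
  have hpen := mul_sub_le_lesPenalty_sub hp hα.le G βh βstar fun k hk j =>
    not_not.1 fun hj => hk ((hG k).2 ⟨j, hj⟩)
  set s : Fin K → ℝ := fun k => ∑ j, |βh ⟨k, j⟩ - βstar ⟨k, j⟩|
  have hl1 : ∑ j, |βh j - βstar j| = ∑ k ∈ G, s k + ∑ k ∈ Gᶜ, s k := by
    rw [sum_add_sum_compl, Fintype.sum_sigma]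
  rw [hl1] at hloss
  have hcone : lam * α * ∑ k ∈ Gᶜ, s k ≤ lam * α * (∑ k ∈ G, s k + 2 * ∑ k ∈ G, p k * s k) := by
    linarith [mul_le_mul_of_nonneg_left hpen hlam.le]
  have hrhs : ∑ k ∈ G, (1 + 2 * (p k : ℝ)) * s k = ∑ k ∈ G, s k + 2 * ∑ k ∈ G, p k * s k := by
    simp only [add_mul, one_mul, sum_add_distrib, mul_assoc, mul_sum]
  rw [hrhs]
  exact le_of_mul_le_mul_left hcone (mul_pos hlam hα)

/-- **Cone condition for the LES estimation error** (deterministic).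
Assume `y = X β* + ε` with `(2/n) max_{k,j} |X kjᵀ ε| ≤ λ α` and weights
`w k = p k`.  Then for every minimizer `β̂` of `Q`, the error `Δ = β̂ - β*`
satisfies `∑_{k ∉ G(β*)} ‖Δ k‖₁ ≤ ∑_{k ∈ G(β*)} (1 + 2 p k) ‖Δ k‖₁`. -/
theorem les_cone_condition (n K : ℕ) (hn : 0 < n) (hK : 0 < K)
    (p : Fin K → ℕ) (hp : ∀ k, 1 ≤ p k)
    (X : Fin n → (Σ k : Fin K, Fin (p k)) → ℝ)
    (βstar : (Σ k : Fin K, Fin (p k)) → ℝ) (ε y : Fin n → ℝ)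
    (hmodel : ∀ i, y i = (∑ j : Σ k : Fin K, Fin (p k), X i j * βstar j) + ε i)
    (lam α : ℝ) (hlam : 0 < lam) (hα : 0 < α)
    (hnoise : ∀ j : Σ k : Fin K, Fin (p k),
      (2 / (n : ℝ)) * |∑ i : Fin n, X i j * ε i| ≤ lam * α)
    (βh : (Σ k : Fin K, Fin (p k)) → ℝ)
    (hmin : IsMinOn
      (fun β : (Σ k : Fin K, Fin (p k)) → ℝ =>
        (1 / (2 * (n : ℝ))) * ∑ i : Fin n, (y i - ∑ j : Σ k : Fin K, Fin (p k), X i j * β j) ^ 2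
          + lam * ∑ k : Fin K, (p k : ℝ) * Real.log (∑ j : Fin (p k), Real.exp (α * |β ⟨k, j⟩|)))
      Set.univ βh)
    (G : Finset (Fin K)) (hG : ∀ k, k ∈ G ↔ ∃ j : Fin (p k), βstar ⟨k, j⟩ ≠ 0) :
    ∑ k ∈ Gᶜ, (∑ j : Fin (p k), |βh ⟨k, j⟩ - βstar ⟨k, j⟩|) ≤
      ∑ k ∈ G, (1 + 2 * (p k : ℝ)) * ∑ j : Fin (p k), |βh ⟨k, j⟩ - βstar ⟨k, j⟩| :=
  les_cone_condition_general n K p hp X βstar ε y hmodel lam α hlam hα hnoise βh hmin G hG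
end
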